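/- arXiv:1203.3777 — 3 statements merged into one kernel-verified Lean document; each statement's English description precedes it below -/
import Mathlib

section
/- Let n ≥ 1 and let p ∈ W_n admit a sum-of-squares decomposition p = Σ_i f_i* f_i with f_i ∈ W_n. Then every nonzero f_i satisfies 2·deg(f_i) ≤ deg(p). Consequently, if p ∈ Σ², then p ∈ Σ²_k for every k ∈ ℕ with 2k ≥ deg(p). -/
open scoped ComplexOrder

noncomputable section

/-- The Weyl algebra `W_n`: a complex `*`-algebra generated by `a 1, …, a n` and their
adjoints, satisfying the canonical commutation relations, in which the normally ordered
monomials `(a*)^s a^t` form a basis (this pins the algebra down up to `*`-isomorphism). -/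
structure WeylAlgebra (n : ℕ) where
  carrier : Type
  [ring : Ring carrier]
  [alg : Algebra ℂ carrier]
  [starRing : StarRing carrier]
  [starModule : StarModule ℂ carrier]
  a : Fin n → carrier
  comm_aa : ∀ i j, a i * a j = a j * a i
  comm_ss : ∀ i j, star (a i) * star (a j) = star (a j) * star (a i)
  ccr : ∀ i j : Fin n, a i * star (a j) - star (a j) * a i = if i = j then 1 else 0
  basis : Module.Basis ((Fin n → ℕ) × (Fin n → ℕ)) ℂ carrier
  basis_eq : ∀ st : (Fin n → ℕ) × (Fin n → ℕ),
    basis st = (List.ofFn fun i => star (a i) ^ st.1 i).prod *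
               (List.ofFn fun i => (a i) ^ st.2 i).prod

attribute [instance] WeylAlgebra.ring WeylAlgebra.alg WeylAlgebra.starRing
  WeylAlgebra.starModule

namespace WeylAlgebra

variable {n : ℕ} (W : WeylAlgebra n)

/-- The monomial `a^t = ∏ i, (a i)^(t i)`. -/
def amon (t : Fin n → ℕ) : W.carrier := (List.ofFn fun i => W.a i ^ t i).prod

/-- The normally ordered monomial `(a*)^s a^t`. -/
def nmon (s t : Fin n → ℕ) : W.carrier :=
  (List.ofFn fun i => star (W.a i) ^ s i).prod * (List.ofFn fun i => W.a i ^ t i).prod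

/-- The `l₁`-norm of the coefficients of the (unique) normal form of `p`. -/
def l1 (p : W.carrier) : ℝ := (W.basis.repr p).sum fun _ c => ‖c‖

/-- The degree of `p`: the maximal `‖s‖₁ + ‖t‖₁` over monomials appearing in the normal
form of `p`. -/
def deg (p : W.carrier) : ℕ :=
  (W.basis.repr p).support.sup fun st => (∑ i, st.1 i) + (∑ i, st.2 i)

/-- `p` is a sum of squares, i.e. `p ∈ Σ²`. -/
def IsSOS (p : W.carrier) : Prop :=
  ∃ (N : ℕ) (f : Fin N → W.carrier), p = ∑ i, star (f i) * f i

/-- `p ∈ Σ²_k`: `p` is a sum of squares of elements of degree at most `k`. -/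
def IsSOSdeg (k : ℕ) (p : W.carrier) : Prop :=
  ∃ (N : ℕ) (f : Fin N → W.carrier), (∀ i, W.deg (f i) ≤ k) ∧ p = ∑ i, star (f i) * f i

/-- The element `g^r_c = ∑_{‖t‖₁ ≤ r} (n-1)!/(c^{‖t‖₁} (n+‖t‖₁-1)!) • a^t (a^t)*`. -/
def gpoly (c : ℝ) (r : ℕ) : W.carrier :=
  ∑ t ∈ (Fintype.piFinset fun _ : Fin n => Finset.range (r + 1)).filter
      (fun t => ∑ i, t i ≤ r),
    ((Nat.factorial (n - 1) : ℂ) /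
        ((c : ℂ) ^ (∑ i, t i) * (Nat.factorial (n + (∑ i, t i) - 1) : ℂ))) •
      (W.amon t * star (W.amon t))

/-- The value in `W` of a single letter (`Sum.inl i ↦ a i`, `Sum.inr i ↦ (a i)*`). -/
def letterVal : Fin n ⊕ Fin n → W.carrier
  | Sum.inl i => W.a i
  | Sum.inr i => star (W.a i)

/-- The value in `W` of a word (monomial) in the letters `a_1,…,a_n,a_1*,…,a_n*`. -/
def wordVal (w : List (Fin n ⊕ Fin n)) : W.carrier := (w.map W.letterVal).prod

end WeylAlgebra

/-- The domain of the Schrödinger representation: finitely supported functions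
`ℕ^n → ℂ`. -/
abbrev DSpace (n : ℕ) := (Fin n → ℕ) →₀ ℂ

/-- The number basis vector `e_m`. -/
def eVec {n : ℕ} (m : Fin n → ℕ) : DSpace n := Finsupp.single m 1

/-- The inner product `⟨f, g⟩ = ∑_m conj (f m) * g m` on `DSpace n`
(antilinear in the first argument). -/
def innerD {n : ℕ} (f g : DSpace n) : ℂ := f.sum fun m c => (starRingEnd ℂ) c * g m

/-- The Schrödinger (Fock) representation of the Weyl algebra `W` on `DSpace n`,
specified by its action on the number basis. -/
structure Schrodinger {n : ℕ} (W : WeylAlgebra n) where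
  rep : W.carrier →ₐ[ℂ] Module.End ℂ (DSpace n)
  rep_a : ∀ (i : Fin n) (m : Fin n → ℕ),
    rep (W.a i) (eVec m) =
      (Real.sqrt (m i) : ℂ) • eVec (Function.update m i (m i - 1))
  rep_astar : ∀ (i : Fin n) (m : Fin n → ℕ),
    rep (star (W.a i)) (eVec m) =
      (Real.sqrt (m i + 1) : ℂ) • eVec (Function.update m i (m i + 1))

namespace Schrodinger

variable {n : ℕ} {W : WeylAlgebra n} (S : Schrodinger W)

/-- `π(p) ≥ 0`: the quadratic form of `π(p)` is nonnegative on the domain. -/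
def PiNonneg (p : W.carrier) : Prop := ∀ φ : DSpace n, 0 ≤ innerD φ (S.rep p φ)

/-- The set of energies `⟨φ, π(p) φ⟩` over normalized `φ` in the domain. -/
def energySet (p : W.carrier) : Set ℝ :=
  { x | ∃ φ : DSpace n, innerD φ φ = 1 ∧ (innerD φ (S.rep p φ)).re = x }

/-- `λ_inf(p)`, the infimum of `⟨φ, π(p) φ⟩` over normalized `φ`. -/
def lambdaInf (p : W.carrier) : ℝ := sInf (S.energySet p)

end Schrodinger

/-!
The normally ordered basis identifies `W_n` linearly with `ℂ[x, y]` through the normal symbol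
`(a*)^s a^t ↦ x^s y^t`. Right multiplication by `a_i` acts on symbols as multiplication by `y_i`,
and right multiplication by `a_i*` as `x_i + ∂/∂y_i`; hence the symbol is multiplicative up to
terms of lower total degree, and `*` becomes complex conjugation of the coefficients composed with
`x ↔ y`. So if `d = max deg f_i` and `deg p < 2d`, the degree-`d` components `P_i` of the symbols
of the `f_i` satisfy `∑ P̄_i(y, x) P_i(x, y) = 0`, the bar conjugating coefficients. At
`x = z̄, y = z` this reads `∑ |P_i(z̄, z)|² = 0`, and a polynomial vanishing on `{(z̄, z)}` is zero
(substitute `x = u - i v`, `y = u + i v` with `u, v` real). This contradicts `P_i ≠ 0` for an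
`f_i` of degree `d`.
-/

section CommutingPowers

variable {M : Type*} [Monoid M] {n : ℕ}

lemma prod_ofFn_eq_noncommProd {f : Fin n → M} (hf : ∀ i j, Commute (f i) (f j)) :
    (List.ofFn f).prod = Finset.univ.noncommProd f
      (Pairwise.set_pairwise (r := Function.onFun Commute f) (fun i j _ => hf i j) _) := by
  unfold Finset.noncommProd
  simp only [Fin.univ_val_map, Multiset.noncommProd_coe]

variable {x : Fin n → M} (hx : ∀ i j, Commute (x i) (x j))
include hx

lemma prod_ofFn_pow_add (s t : Fin n → ℕ) :
    (List.ofFn fun i => x i ^ (s + t) i).prod =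
      (List.ofFn fun i => x i ^ s i).prod * (List.ofFn fun i => x i ^ t i).prod := by
  rw [prod_ofFn_eq_noncommProd fun i j => (hx i j).pow_pow ((s + t) i) ((s + t) j),
    prod_ofFn_eq_noncommProd fun i j => (hx i j).pow_pow (s i) (s j),
    prod_ofFn_eq_noncommProd fun i j => (hx i j).pow_pow (t i) (t j),
    ← Finset.noncommProd_mul_distrib _ _ _ _
      (Pairwise.set_pairwise (fun i j _ => (hx i j).pow_pow (t i) (s j)) _)]
  exact Finset.noncommProd_congr rfl (fun i _ => pow_add _ _ _) _

lemma prod_ofFn_pow_single [DecidableEq (Fin n)] (j : Fin n) (k : ℕ) :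
    (List.ofFn fun i => x i ^ Pi.single j k i).prod = x j ^ k := by
  rw [prod_ofFn_eq_noncommProd fun i i' => (hx i i').pow_pow _ _,
    ← Finset.noncommProd_erase_mul _ (Finset.mem_univ j), Pi.single_eq_same]
  convert one_mul (x j ^ k)
  refine (Finset.noncommProd_eq_pow_card _ _ _ 1 fun i hi => ?_).trans (one_pow _)
  rw [Pi.single_eq_of_ne (Finset.ne_of_mem_erase hi), pow_zero]

end CommutingPowers

lemma Pi.induction_add_single {ι : Type*} [Finite ι] [DecidableEq ι] {motive : (ι → ℕ) → Prop}
    (zero : motive 0) (add_single : ∀ t i, motive t → motive (t + Pi.single i 1)) (t : ι → ℕ) :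
    motive t := by
  suffices ∀ u, motive u → motive (u + t) by simpa using this 0 zero
  induction t using Pi.single_induction with
  | zero => simp
  | add f g hf hg => exact fun u hu => add_assoc u f g ▸ hg _ (hf u hu)
  | single i k =>
    induction k with
    | zero => simp
    | succ k ih =>
      intro u hu
      rw [Pi.single_add, ← add_assoc]
      exact add_single _ _ (ih u hu)

lemma pow_mul_eq_mul_pow_add_of_mul_sub_mul_eq_one {R : Type*} [Ring R] {x y : R}
    (h : x * y - y * x = 1) (k : ℕ) : x ^ k * y = y * x ^ k + k • x ^ (k - 1) := by
  induction k with
  | zero => simp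
  | succ k ih =>
    rw [pow_succ, mul_assoc, sub_eq_iff_eq_add'.mp h, mul_add, mul_one, ← mul_assoc, ih]
    rcases k with _ | k
    · simp
    · simp only [add_mul, smul_mul_assoc, mul_assoc, ← pow_succ, Nat.add_sub_cancel]
      rw [succ_nsmul _ (k + 1)]
      abel

namespace MvPolynomial

open Complex ComplexConjugate

lemma homogeneousComponent_totalDegree_ne_zero {σ R : Type*} [CommSemiring R]
    {P : MvPolynomial σ R} (hP : P ≠ 0) : homogeneousComponent P.totalDegree P ≠ 0 := by
  obtain ⟨m, hm, hmd⟩ := Finset.exists_mem_eq_sup P.support (support_nonempty.mpr hP)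
    fun m => m.degree
  intro h
  have := congrArg (coeff m) h
  rw [coeff_homogeneousComponent, if_pos (show m.degree = P.totalDegree from hmd.symm),
    coeff_zero] at this
  exact mem_support_iff.mp hm this

lemma eval_aeval {σ τ R : Type*} [CommSemiring R] (w : τ → R) (g : σ → MvPolynomial τ R)
    (P : MvPolynomial σ R) : eval w (aeval g P) = eval (fun s => eval w (g s)) P := by
  simpa only [aeval_eq_eval] using comp_aeval_apply g (aeval w) P

lemma monomial_add_one {σ R : Type*} [CommSemiring R] (m m' : σ →₀ ℕ) :
    monomial (m + m') (1 : R) = monomial m 1 * monomial m' 1 := by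
  rw [monomial_mul, one_mul]

section TotalDegreeLT

variable (σ R : Type*) [CommRing R]

def totalDegreeLT (D : ℕ) : Submodule R (MvPolynomial σ R) :=
  restrictSupport R {m | m.degree < D}

variable {σ R} {D d e : ℕ} {P Q : MvPolynomial σ R}

lemma mem_totalDegreeLT : P ∈ totalDegreeLT σ R D ↔ ∀ m ∈ P.support, m.degree < D :=
  Iff.rfl

lemma mem_totalDegreeLT_succ : P ∈ totalDegreeLT σ R (d + 1) ↔ P.totalDegree ≤ d := by
  simp only [mem_totalDegreeLT, Nat.lt_succ_iff, totalDegree, Finset.sup_le_iff]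
  rfl

lemma totalDegreeLT_mono (h : D ≤ e) : totalDegreeLT σ R D ≤ totalDegreeLT σ R e :=
  restrictSupport_mono R fun _ hm => lt_of_lt_of_le hm h

lemma mul_mem_totalDegreeLT (hP : P ∈ totalDegreeLT σ R D) (hQ : Q.totalDegree ≤ e) :
    P * Q ∈ totalDegreeLT σ R (D + e) := by
  classical
  rw [mem_totalDegreeLT] at hP ⊢
  intro m hm
  obtain ⟨a, ha, b, hb, rfl⟩ := Finset.mem_add.mp (support_mul P Q hm)
  rw [map_add]
  exact Nat.add_lt_add_of_lt_of_le (hP a ha) ((le_totalDegree hb).trans hQ)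

lemma pderiv_mem_totalDegreeLT (hP : P ∈ totalDegreeLT σ R D) (i : σ) :
    pderiv i P ∈ totalDegreeLT σ R D := by
  rw [mem_totalDegreeLT] at hP
  rw [P.as_sum, map_sum]
  refine Submodule.sum_mem _ fun m hm => ?_
  rw [pderiv_monomial, totalDegreeLT, monomial_mem_restrictSupport]
  exact Or.inl (show _ < D from (Finsupp.degree_mono tsub_le_self).trans_lt (hP m hm))

lemma homogeneousComponent_eq_zero_of_mem_totalDegreeLT (hP : P ∈ totalDegreeLT σ R D)
    (hd : D ≤ d) : homogeneousComponent d P = 0 :=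
  homogeneousComponent_eq_zero' _ _ fun _ hm => ((hP hm).trans_le hd).ne

lemma sub_homogeneousComponent_mem_totalDegreeLT (hP : P.totalDegree ≤ d) :
    P - homogeneousComponent d P ∈ totalDegreeLT σ R d := by
  rw [mem_totalDegreeLT]
  intro m hm
  rw [mem_support_iff, coeff_sub, coeff_homogeneousComponent] at hm
  split_ifs at hm with hmd
  · exact absurd (sub_self _) hm
  · exact lt_of_le_of_ne ((le_totalDegree (by simpa using hm)).trans hP) hmd

lemma homogeneousComponent_add_mul (hP : P.totalDegree ≤ d) (hQ : Q.totalDegree ≤ e) :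
    homogeneousComponent (d + e) (P * Q) =
      homogeneousComponent d P * homogeneousComponent e Q := by
  set P₀ := homogeneousComponent d P
  set Q₀ := homogeneousComponent e Q
  have hP₀ : P₀.IsHomogeneous d := homogeneousComponent_isHomogeneous d P
  have hQ₀ : Q₀.IsHomogeneous e := homogeneousComponent_isHomogeneous e Q
  have hlow : P * Q - P₀ * Q₀ ∈ totalDegreeLT σ R (d + e) := by
    have hQ' := mul_mem_totalDegreeLT (sub_homogeneousComponent_mem_totalDegreeLT hQ)
      hP₀.totalDegree_le
    rw [add_comm e d] at hQ'
    convert add_mem (mul_mem_totalDegreeLT (sub_homogeneousComponent_mem_totalDegreeLT hP) hQ)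
      hQ' using 1
    ring
  rw [← sub_add_cancel (P * Q) (P₀ * Q₀), map_add,
    homogeneousComponent_eq_zero_of_mem_totalDegreeLT hlow le_rfl, zero_add,
    homogeneousComponent_eq_self (hP₀.mul hQ₀)]

end TotalDegreeLT

section ConjSwap

variable {ι : Type*}

def conjSwap : MvPolynomial (ι ⊕ ι) ℂ →+* MvPolynomial (ι ⊕ ι) ℂ :=
  (map (starRingEnd ℂ)).comp (rename Sum.swap).toRingHom

lemma conjSwap_apply (P : MvPolynomial (ι ⊕ ι) ℂ) :
    conjSwap P = map (starRingEnd ℂ) (rename Sum.swap P) := rfl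

lemma conjSwap_monomial (m : ι ⊕ ι →₀ ℕ) (c : ℂ) :
    conjSwap (monomial m c) = monomial (m.mapDomain Sum.swap) (conj c) := by
  rw [conjSwap_apply, rename_monomial, map_monomial]

lemma conjSwap_smul (c : ℂ) (P : MvPolynomial (ι ⊕ ι) ℂ) :
    conjSwap (c • P) = conj c • conjSwap P := by
  rw [smul_eq_C_mul, smul_eq_C_mul, map_mul, conjSwap_apply (C c), rename_C, map_C]

lemma totalDegree_conjSwap_le (P : MvPolynomial (ι ⊕ ι) ℂ) :
    (conjSwap P).totalDegree ≤ P.totalDegree :=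
  (totalDegree_le_of_support_subset (support_map_subset _ _)).trans (totalDegree_rename_le _ _)

lemma conjSwap_homogeneousComponent (d : ℕ) (P : MvPolynomial (ι ⊕ ι) ℂ) :
    conjSwap (homogeneousComponent d P) = homogeneousComponent d (conjSwap P) := by
  rw [conjSwap_apply, conjSwap_apply, rename_homogeneousComponent]
  ext m
  simp only [coeff_map, coeff_homogeneousComponent]
  split_ifs <;> simp

lemma eval_conjSwap (z : ι → ℂ) (P : MvPolynomial (ι ⊕ ι) ℂ) :
    eval (Sum.elim (conj ∘ z) z) (conjSwap P) = conj (eval (Sum.elim (conj ∘ z) z) P) := by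
  have hswap : Sum.elim (conj ∘ z) z ∘ Sum.swap = conj ∘ Sum.elim (conj ∘ z) z := by
    ext (i | i) <;> simp
  rw [conjSwap_apply, eval_map, eval₂_rename, hswap, eval, coe_eval₂Hom, eval₂_comp_left,
    RingHom.comp_id]

lemma eq_zero_of_eval_conj_elim_eq_zero {ι : Type*} {P : MvPolynomial (ι ⊕ ι) ℂ}
    (h : ∀ z : ι → ℂ, eval (Sum.elim (conj ∘ z) z) P = 0) : P = 0 := by
  set g : ι ⊕ ι → MvPolynomial (ι ⊕ ι) ℂ :=
    Sum.elim (fun j => X (.inl j) - C I * X (.inr j)) (fun j => X (.inl j) + C I * X (.inr j))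
  have hg : aeval g P = 0 := by
    refine funext_set (fun _ => Set.range ((↑) : ℝ → ℂ))
      (fun _ => Set.infinite_range_of_injective ofReal_injective) fun x hx => ?_
    choose r hr using fun s => hx s trivial
    rw [eval_aeval, map_zero, ← h fun j => x (.inl j) + I * x (.inr j)]
    congr 2
    ext (j | j) <;> simp [g, ← hr, Complex.ext_iff]
  refine MvPolynomial.funext fun w => ?_
  have := congrArg (eval (Sum.elim (fun j => (w (.inl j) + w (.inr j)) / 2)
    (fun j => I * (w (.inl j) - w (.inr j)) / 2))) hg
  rw [eval_aeval, map_zero] at this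
  rw [map_zero, ← this]
  congr 2
  ext (j | j) <;> simp only [g, Sum.elim_inl, Sum.elim_inr, map_sub, map_add, map_mul, eval_X,
    eval_C]
  · linear_combination (w (.inl j) - w (.inr j)) / 2 * I_sq
  · linear_combination -(w (.inl j) - w (.inr j)) / 2 * I_sq

lemma eq_zero_of_sum_conjSwap_mul_self_eq_zero {ι α : Type*} {s : Finset α}
    {P : α → MvPolynomial (ι ⊕ ι) ℂ} (h : ∑ k ∈ s, conjSwap (P k) * P k = 0) {i : α}
    (hi : i ∈ s) : P i = 0 := by
  refine eq_zero_of_eval_conj_elim_eq_zero fun z => ?_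
  have hnorm : ∑ k ∈ s, normSq (eval (Sum.elim (conj ∘ z) z) (P k)) = 0 := by
    have := congrArg (eval (Sum.elim (conj ∘ z) z)) h
    simp only [map_sum, map_mul, eval_conjSwap, map_zero] at this
    exact_mod_cast (by simpa [normSq_eq_conj_mul_self] using this :
      ((∑ k ∈ s, normSq (eval (Sum.elim (conj ∘ z) z) (P k)) : ℝ) : ℂ) = 0)
  exact normSq_eq_zero.mp
    ((Finset.sum_eq_zero_iff_of_nonneg fun k _ => normSq_nonneg _).mp hnorm i hi)

end ConjSwap

end MvPolynomial

section ExponentEquiv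

variable {ι : Type*} [Fintype ι]

def exponentEquiv : (ι → ℕ) × (ι → ℕ) ≃ (ι ⊕ ι →₀ ℕ) :=
  (Equiv.sumArrowEquivProdArrow ι ι ℕ).symm.trans Finsupp.equivFunOnFinite.symm

@[simp]
lemma exponentEquiv_apply (st : (ι → ℕ) × (ι → ℕ)) (x : ι ⊕ ι) :
    exponentEquiv st x = Sum.elim st.1 st.2 x := rfl

lemma exponentEquiv_zero : exponentEquiv ((0 : ι → ℕ), (0 : ι → ℕ)) = 0 := by
  ext (j | j) <;> rfl

lemma degree_exponentEquiv (st : (ι → ℕ) × (ι → ℕ)) :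
    (exponentEquiv st).degree = ∑ i, st.1 i + ∑ i, st.2 i := by
  rw [Finsupp.degree_eq_sum, Fintype.sum_sum_type]
  rfl

lemma totalDegree_monomial_exponentEquiv_le {R : Type*} [CommSemiring R]
    (st : (ι → ℕ) × (ι → ℕ)) (c : R) :
    (MvPolynomial.monomial (exponentEquiv st) c).totalDegree ≤ ∑ i, st.1 i + ∑ i, st.2 i :=
  (MvPolynomial.totalDegree_monomial_le _ _).trans_eq (degree_exponentEquiv st)

variable (s t : ι → ℕ)

lemma exponentEquiv_eq_add :
    exponentEquiv (s, t) = exponentEquiv (s, 0) + exponentEquiv (0, t) := by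
  ext (j | j) <;> simp

lemma mapDomain_swap_exponentEquiv :
    (exponentEquiv (s, t)).mapDomain Sum.swap = exponentEquiv (t, s) := by
  ext x
  rw [← Equiv.sumComm_apply, Finsupp.mapDomain_equiv_apply]
  cases x <;> rfl

variable [DecidableEq ι] (i : ι)

lemma sum_add_single_one :
    ∑ j, (s + Pi.single i 1 : ι → ℕ) j = ∑ j, s j + 1 := by
  simp [Finset.sum_add_distrib]

lemma exponentEquiv_add_single_left :
    exponentEquiv (s + Pi.single i 1, t) = exponentEquiv (s, t) + Finsupp.single (.inl i) 1 := by
  ext (j | j) <;> simp [Pi.single_apply, Finsupp.single_apply, eq_comm]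

lemma exponentEquiv_add_single_right :
    exponentEquiv (s, t + Pi.single i 1) = exponentEquiv (s, t) + Finsupp.single (.inr i) 1 := by
  ext (j | j) <;> simp [Pi.single_apply, Finsupp.single_apply, eq_comm]

lemma exponentEquiv_sub_single_right :
    exponentEquiv (s, t - Pi.single i 1) = exponentEquiv (s, t) - Finsupp.single (.inr i) 1 := by
  ext (j | j) <;> simp [Pi.single_apply, Finsupp.single_apply, eq_comm]

end ExponentEquiv

namespace WeylAlgebra

open MvPolynomial

variable {n : ℕ} (W : WeylAlgebra n)

def smon (s : Fin n → ℕ) : W.carrier := (List.ofFn fun i => star (W.a i) ^ s i).prod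

lemma nmon_eq_smon_mul_amon (s t : Fin n → ℕ) : W.nmon s t = W.smon s * W.amon t := rfl

lemma commute_a_star_a {i j : Fin n} (h : i ≠ j) : Commute (W.a i) (star (W.a j)) :=
  sub_eq_zero.mp (by simpa [h] using W.ccr i j)

lemma amon_add (s t : Fin n → ℕ) : W.amon (s + t) = W.amon s * W.amon t :=
  prod_ofFn_pow_add W.comm_aa s t

lemma amon_single (i : Fin n) (k : ℕ) : W.amon (Pi.single i k) = W.a i ^ k :=
  prod_ofFn_pow_single W.comm_aa i k

lemma amon_zero : W.amon 0 = 1 := by simp [amon]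

lemma smon_add (s t : Fin n → ℕ) : W.smon (s + t) = W.smon s * W.smon t :=
  prod_ofFn_pow_add W.comm_ss s t

lemma smon_single (i : Fin n) (k : ℕ) : W.smon (Pi.single i k) = star (W.a i) ^ k :=
  prod_ofFn_pow_single W.comm_ss i k

lemma smon_zero : W.smon 0 = 1 := by simp [smon]

lemma star_amon (t : Fin n → ℕ) : star (W.amon t) = W.smon t := by
  induction t using Pi.induction_add_single with
  | zero => rw [amon_zero, smon_zero, star_one]
  | add_single t i ih =>
    rw [amon_add, amon_single, pow_one, star_mul, ih, add_comm, smon_add, smon_single, pow_one]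

lemma star_smon (s : Fin n → ℕ) : star (W.smon s) = W.amon s := by
  rw [← star_amon, star_star]

lemma star_nmon (s t : Fin n → ℕ) : star (W.nmon s t) = W.nmon t s := by
  rw [nmon_eq_smon_mul_amon, nmon_eq_smon_mul_amon, star_mul, star_amon, star_smon]

lemma amon_mul_star_a (t : Fin n → ℕ) (i : Fin n) :
    W.amon t * star (W.a i) = star (W.a i) * W.amon t + t i • W.amon (t - Pi.single i 1) := by
  set t₀ := Function.update t i 0
  have ht : t = t₀ + Pi.single i (t i) := by
    ext j; rcases eq_or_ne j i with rfl | hj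
    · simp [t₀]
    · simp [t₀, hj]
  have ht' : t - Pi.single i 1 = t₀ + Pi.single i (t i - 1) := by
    ext j; rcases eq_or_ne j i with rfl | hj
    · simp [t₀]
    · simp [t₀, hj]
  have hcomm : Commute (W.amon t₀) (star (W.a i)) := by
    refine Commute.list_prod_left _ _ fun _ hx => ?_
    obtain ⟨j, rfl⟩ := List.mem_ofFn.mp hx
    rcases eq_or_ne j i with rfl | hj
    · simp [t₀]
    · exact (W.commute_a_star_a hj).pow_left _
  have hccr : W.a i * star (W.a i) - star (W.a i) * W.a i = 1 := by simpa using W.ccr i i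
  rw [ht', amon_add, amon_single]
  conv_lhs => rw [ht, amon_add, amon_single, mul_assoc,
    pow_mul_eq_mul_pow_add_of_mul_sub_mul_eq_one hccr, mul_add, ← mul_assoc, hcomm.eq,
    mul_assoc, mul_smul_comm, ← amon_single, ← amon_add, ← ht]

/-- `X (.inl i)` stands for `a_i*` and `X (.inr i)` for `a_i`. -/
def normalSymbol : W.carrier ≃ₗ[ℂ] MvPolynomial (Fin n ⊕ Fin n) ℂ :=
  W.basis.repr ≪≫ₗ Finsupp.domLCongr exponentEquiv ≪≫ₗ (basisMonomials _ ℂ).repr.symm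

lemma normalSymbol_basis (st : (Fin n → ℕ) × (Fin n → ℕ)) :
    W.normalSymbol (W.basis st) = monomial (exponentEquiv st) 1 := by
  simp [normalSymbol]

lemma basis_eq_nmon (st : (Fin n → ℕ) × (Fin n → ℕ)) : W.basis st = W.nmon st.1 st.2 :=
  W.basis_eq st

lemma normalSymbol_nmon (s t : Fin n → ℕ) :
    W.normalSymbol (W.nmon s t) = monomial (exponentEquiv (s, t)) 1 :=
  W.basis_eq_nmon (s, t) ▸ W.normalSymbol_basis (s, t)

lemma coeff_normalSymbol (p : W.carrier) (m : Fin n ⊕ Fin n →₀ ℕ) :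
    coeff m (W.normalSymbol p) = W.basis.repr p (exponentEquiv.symm m) :=
  rfl

@[elab_as_elim]
lemma nmon_induction {motive : W.carrier → Prop} (nmon : ∀ s t, motive (W.nmon s t))
    (add : ∀ p q, motive p → motive q → motive (p + q))
    (smul : ∀ (c : ℂ) p, motive p → motive (c • p)) (p : W.carrier) : motive p := by
  induction W.basis.mem_span p using Submodule.span_induction with
  | mem x hx =>
    obtain ⟨⟨s, t⟩, rfl⟩ := hx
    exact W.basis_eq_nmon (s, t) ▸ nmon s t
  | zero => simpa using smul 0 _ (nmon 0 0)
  | add x y _ _ hx hy => exact add x y hx hy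
  | smul c x _ hx => exact smul c x hx

lemma support_normalSymbol (p : W.carrier) :
    (W.normalSymbol p).support = (W.basis.repr p).support.map exponentEquiv.toEmbedding := by
  ext m
  simp [mem_support_iff, coeff_normalSymbol, Finset.mem_map_equiv]

lemma totalDegree_normalSymbol (p : W.carrier) : (W.normalSymbol p).totalDegree = W.deg p := by
  rw [totalDegree, support_normalSymbol, Finset.sup_map, deg]
  congr 1
  funext st
  exact degree_exponentEquiv st

lemma normalSymbol_star (p : W.carrier) :
    W.normalSymbol (star p) = conjSwap (W.normalSymbol p) := by
  induction p using W.nmon_induction with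
  | nmon s t =>
    rw [star_nmon, normalSymbol_nmon, normalSymbol_nmon, conjSwap_monomial,
      mapDomain_swap_exponentEquiv, (starRingEnd ℂ).map_one]
  | add p q hp hq => rw [star_add, map_add, map_add, hp, hq, map_add]
  | smul c p hp => rw [star_smul, map_smul, map_smul, hp, conjSwap_smul]; rfl

lemma nmon_mul_a (s t : Fin n → ℕ) (i : Fin n) :
    W.nmon s t * W.a i = W.nmon s (t + Pi.single i 1) := by
  rw [nmon_eq_smon_mul_amon, nmon_eq_smon_mul_amon, mul_assoc, amon_add, amon_single, pow_one]

lemma nmon_mul_star_a (s t : Fin n → ℕ) (i : Fin n) :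
    W.nmon s t * star (W.a i) =
      W.nmon (s + Pi.single i 1) t + t i • W.nmon s (t - Pi.single i 1) := by
  rw [nmon_eq_smon_mul_amon, nmon_eq_smon_mul_amon, nmon_eq_smon_mul_amon, mul_assoc,
    amon_mul_star_a, mul_add, ← mul_assoc, smon_add, smon_single, pow_one, mul_smul_comm]

lemma normalSymbol_mul_a (q : W.carrier) (i : Fin n) :
    W.normalSymbol (q * W.a i) = W.normalSymbol q * X (.inr i) := by
  induction q using W.nmon_induction with
  | nmon s t =>
    rw [nmon_mul_a, normalSymbol_nmon, normalSymbol_nmon, X, monomial_mul, one_mul,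
      exponentEquiv_add_single_right]
  | add p q hp hq => rw [add_mul, map_add, map_add, hp, hq, add_mul]
  | smul c p hp => rw [smul_mul_assoc, map_smul, map_smul, hp, smul_mul_assoc]

lemma normalSymbol_mul_star_a (q : W.carrier) (i : Fin n) :
    W.normalSymbol (q * star (W.a i)) =
      W.normalSymbol q * X (.inl i) + pderiv (.inr i) (W.normalSymbol q) := by
  induction q using W.nmon_induction with
  | nmon s t =>
    rw [nmon_mul_star_a, map_add, map_nsmul, normalSymbol_nmon,
      normalSymbol_nmon, normalSymbol_nmon, X, monomial_mul, one_mul, pderiv_monomial,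
      exponentEquiv_add_single_left, exponentEquiv_sub_single_right, smul_monomial]
    simp
  | add p q hp hq => rw [add_mul, map_add, map_add, hp, hq, add_mul, map_add]; ring
  | smul c p hp =>
    rw [smul_mul_assoc, map_smul, map_smul, hp, smul_add, smul_mul_assoc, Derivation.map_smul]

lemma normalSymbol_mul_amon (q : W.carrier) (t : Fin n → ℕ) :
    W.normalSymbol (q * W.amon t) = W.normalSymbol q * monomial (exponentEquiv (0, t)) 1 := by
  induction t using Pi.induction_add_single with
  | zero => rw [amon_zero, mul_one, exponentEquiv_zero, monomial_zero', C_1, mul_one]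
  | add_single t i ih =>
    rw [amon_add, amon_single, pow_one, ← mul_assoc, normalSymbol_mul_a, ih, mul_assoc, X,
      monomial_mul, one_mul, ← exponentEquiv_add_single_right]

lemma normalSymbol_mul_smon_sub_mem (q : W.carrier) (s : Fin n → ℕ) {D : ℕ}
    (hq : (W.normalSymbol q).totalDegree ≤ D) :
    W.normalSymbol (q * W.smon s) - W.normalSymbol q * monomial (exponentEquiv (s, 0)) 1 ∈
      totalDegreeLT _ ℂ (D + ∑ i, s i) := by
  induction s using Pi.induction_add_single with
  | zero =>
    rw [smon_zero, mul_one, exponentEquiv_zero, monomial_zero', C_1, mul_one, sub_self]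
    exact zero_mem _
  | add_single s i ih =>
    set A := W.normalSymbol (q * W.smon s)
    set M : MvPolynomial (Fin n ⊕ Fin n) ℂ := monomial (exponentEquiv (s, 0)) 1
    have hM : (W.normalSymbol q * M).totalDegree ≤ D + ∑ j, s j :=
      (totalDegree_mul _ _).trans (add_le_add hq
        ((totalDegree_monomial_exponentEquiv_le _ _).trans_eq (by simp)))
    have hA : A ∈ totalDegreeLT _ ℂ (D + ∑ j, s j + 1) := by
      rw [← sub_add_cancel A (W.normalSymbol q * M)]
      exact add_mem (totalDegreeLT_mono (Nat.le_succ _) ih) (mem_totalDegreeLT_succ.mpr hM)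
    have hstep : W.normalSymbol (q * W.smon (s + Pi.single i 1)) -
        W.normalSymbol q * monomial (exponentEquiv (s + Pi.single i 1, 0)) 1 =
          (A - W.normalSymbol q * M) * X (.inl i) + pderiv (.inr i) A := by
      rw [smon_add, smon_single, pow_one, ← mul_assoc, normalSymbol_mul_star_a,
        exponentEquiv_add_single_left, monomial_add_one, ← X]
      simp only [A, M]
      ring
    rw [hstep, sum_add_single_one, ← add_assoc]
    exact add_mem (mul_mem_totalDegreeLT ih (totalDegree_X _).le) (pderiv_mem_totalDegreeLT hA _)

lemma normalSymbol_mul_nmon_sub_mem (q : W.carrier) (s t : Fin n → ℕ) {D : ℕ}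
    (hq : (W.normalSymbol q).totalDegree ≤ D) :
    W.normalSymbol (q * W.nmon s t) - W.normalSymbol q * monomial (exponentEquiv (s, t)) 1 ∈
      totalDegreeLT _ ℂ (D + (∑ i, s i + ∑ i, t i)) := by
  have hsplit : W.normalSymbol (q * W.nmon s t) -
      W.normalSymbol q * monomial (exponentEquiv (s, t)) 1 =
        (W.normalSymbol (q * W.smon s) - W.normalSymbol q * monomial (exponentEquiv (s, 0)) 1) *
          monomial (exponentEquiv (0, t)) 1 := by
    rw [nmon_eq_smon_mul_amon, ← mul_assoc, normalSymbol_mul_amon, exponentEquiv_eq_add s t,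
      monomial_add_one]
    ring
  rw [hsplit, ← add_assoc]
  exact mul_mem_totalDegreeLT (W.normalSymbol_mul_smon_sub_mem q s hq)
    ((totalDegree_monomial_exponentEquiv_le _ _).trans_eq (by simp))

lemma normalSymbol_mul_sub_mem {q r : W.carrier} {d e : ℕ} (hq : W.deg q ≤ d)
    (hr : W.deg r ≤ e) :
    W.normalSymbol (q * r) - W.normalSymbol q * W.normalSymbol r ∈ totalDegreeLT _ ℂ (d + e) := by
  have hbasis : ∀ st ∈ (W.basis.repr r).support,
      W.normalSymbol (q * W.basis st) - W.normalSymbol q * W.normalSymbol (W.basis st) ∈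
        totalDegreeLT _ ℂ (d + e) := fun st hst => by
    have hst : ∑ i, st.1 i + ∑ i, st.2 i ≤ e := (Finset.le_sup
      (f := fun st : (Fin n → ℕ) × (Fin n → ℕ) => ∑ i, st.1 i + ∑ i, st.2 i) hst).trans hr
    rw [← totalDegree_normalSymbol] at hq
    rw [W.basis_eq_nmon, normalSymbol_nmon]
    exact totalDegreeLT_mono (Nat.add_le_add_left hst d)
      (W.normalSymbol_mul_nmon_sub_mem q st.1 st.2 hq)
  have hr : r = ∑ st ∈ (W.basis.repr r).support, W.basis.repr r st • W.basis st := by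
    conv_lhs => rw [← W.basis.linearCombination_repr r]
    rw [Finsupp.linearCombination_apply, Finsupp.sum]
  rw [hr, Finset.mul_sum, map_sum, map_sum, Finset.mul_sum, ← Finset.sum_sub_distrib]
  refine Submodule.sum_mem _ fun st hst => ?_
  rw [mul_smul_comm, map_smul, map_smul, mul_smul_comm, ← smul_sub]
  exact Submodule.smul_mem _ _ (hbasis st hst)

lemma homogeneousComponent_normalSymbol_mul {q r : W.carrier} {d e : ℕ} (hq : W.deg q ≤ d)
    (hr : W.deg r ≤ e) :
    homogeneousComponent (d + e) (W.normalSymbol (q * r)) =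
      homogeneousComponent d (W.normalSymbol q) * homogeneousComponent e (W.normalSymbol r) := by
  rw [← sub_add_cancel (W.normalSymbol (q * r)) (W.normalSymbol q * W.normalSymbol r), map_add,
    homogeneousComponent_eq_zero_of_mem_totalDegreeLT (W.normalSymbol_mul_sub_mem hq hr) le_rfl,
    zero_add, homogeneousComponent_add_mul (by rwa [totalDegree_normalSymbol])
      (by rwa [totalDegree_normalSymbol])]

lemma deg_star_le (p : W.carrier) : W.deg (star p) ≤ W.deg p := by
  rw [← totalDegree_normalSymbol, ← totalDegree_normalSymbol, normalSymbol_star]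
  exact totalDegree_conjSwap_le _

lemma two_mul_deg_le_deg_sum_star_mul {ι : Type*} (s : Finset ι) (f : ι → W.carrier) {i : ι}
    (hi : i ∈ s) : 2 * W.deg (f i) ≤ W.deg (∑ j ∈ s, star (f j) * f j) := by
  set d := s.sup fun j => W.deg (f j)
  obtain ⟨j, hj, hjd⟩ := Finset.exists_mem_eq_sup s ⟨i, hi⟩ fun j => W.deg (f j)
  suffices 2 * d ≤ W.deg (∑ j ∈ s, star (f j) * f j) from
    (Nat.mul_le_mul_left 2 (Finset.le_sup (f := fun j => W.deg (f j)) hi)).trans this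
  by_contra! hlt
  set P := fun k => homogeneousComponent d (W.normalSymbol (f k))
  have hsum : ∑ k ∈ s, conjSwap (P k) * P k = 0 := by
    have htop : ∀ k ∈ s, homogeneousComponent (d + d) (W.normalSymbol (star (f k) * f k)) =
        conjSwap (P k) * P k := fun k hk => by
      have hk : W.deg (f k) ≤ d := Finset.le_sup (f := fun j => W.deg (f j)) hk
      rw [W.homogeneousComponent_normalSymbol_mul ((W.deg_star_le _).trans hk) hk,
        normalSymbol_star, ← conjSwap_homogeneousComponent]
    rw [← Finset.sum_congr rfl htop, ← map_sum, ← map_sum]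
    exact homogeneousComponent_eq_zero _ _ (by rw [totalDegree_normalSymbol]; omega)
  have hfj : W.normalSymbol (f j) ≠ 0 := fun h0 => by
    rw [← totalDegree_normalSymbol, h0, totalDegree_zero] at hjd
    omega
  apply homogeneousComponent_totalDegree_ne_zero hfj
  rw [totalDegree_normalSymbol, ← hjd]
  exact eq_zero_of_sum_conjSwap_mul_self_eq_zero hsum hj

end WeylAlgebra

theorem sos_degree_bound_general {n : ℕ} (W : WeylAlgebra n)
    (N : ℕ) (f : Fin N → W.carrier) (p : W.carrier)
    (hp : p = ∑ i, star (f i) * f i) :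
    (∀ i, f i ≠ 0 → 2 * W.deg (f i) ≤ W.deg p) ∧
    (∀ q : W.carrier, W.IsSOS q → ∀ k : ℕ, W.deg q ≤ 2 * k → W.IsSOSdeg k q) := by
  refine ⟨fun i _ => hp ▸ W.two_mul_deg_le_deg_sum_star_mul _ f (Finset.mem_univ i), ?_⟩
  rintro q ⟨M, g, rfl⟩ k hk
  refine ⟨M, g, fun i => ?_, rfl⟩
  have := W.two_mul_deg_le_deg_sum_star_mul _ g (Finset.mem_univ i)
  omega

/-- In a sum-of-squares decomposition `p = ∑ i, f i* · f i`, every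
nonzero `f i` satisfies `2·deg(f i) ≤ deg p`; consequently, any `p ∈ Σ²` lies in `Σ²_k`
whenever `2k ≥ deg p`. -/
theorem sos_degree_bound {n : ℕ} (hn : 1 ≤ n) (W : WeylAlgebra n)
    (N : ℕ) (f : Fin N → W.carrier) (p : W.carrier)
    (hp : p = ∑ i, star (f i) * f i) :
    (∀ i, f i ≠ 0 → 2 * W.deg (f i) ≤ W.deg p) ∧
    (∀ q : W.carrier, W.IsSOS q → ∀ k : ℕ, W.deg q ≤ 2 * k → W.IsSOSdeg k q) :=
  sos_degree_bound_general W N f p hp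
end
end

section
/- In the Weyl algebra W_1, for all natural numbers l, k with 0 ≤ l ≤ k, the element a^l (a*)^k a^{k−l} belongs to Σ². -/
open scoped ComplexOrder

noncomputable section

/-
The canonical commutation relation gives `a (a*)^(m+1) = (a*)^(m+1) a + (m+1) (a*)^m`, hence
`a^(l+1) (a*)^(l+1+j) a^j = a^l (a*)^(l+j+1) a^(j+1) + (l+j+1) a^l (a*)^(l+j) a^j`.
Both terms on the right have smaller `l`, so induction on `l` reduces everything to the
squares `(a*)^j a^j = (a^j)* a^j`, and `Σ²` is closed under sums and multiplication by
natural numbers.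
-/

theorem mul_pow_succ_of_mul_sub_mul_eq_one {R : Type*} [Ring R] {x y : R}
    (h : x * y - y * x = 1) (m : ℕ) :
    x * y ^ (m + 1) = y ^ (m + 1) * x + (m + 1) • y ^ m := by
  have hxy : x * y = y * x + 1 := by rw [← h]; abel
  induction m with
  | zero => simpa using hxy
  | succ m ih =>
    calc x * y ^ (m + 2) = x * y ^ (m + 1) * y := by rw [mul_assoc, ← pow_succ]
      _ = y ^ (m + 1) * (x * y) + (m + 1) • y ^ (m + 1) := by
        rw [ih, add_mul, smul_mul_assoc, ← pow_succ, mul_assoc]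
      _ = y ^ (m + 2) * x + (m + 2) • y ^ (m + 1) := by
        rw [hxy, mul_add, mul_one, ← mul_assoc, ← pow_succ, succ_nsmul _ (m + 1)]
        abel

theorem pow_succ_mul_pow_succ_mul_pow_of_mul_sub_mul_eq_one {R : Type*} [Ring R] {x y : R}
    (h : x * y - y * x = 1) (l m j : ℕ) :
    x ^ (l + 1) * y ^ (m + 1) * x ^ j
      = x ^ l * y ^ (m + 1) * x ^ (j + 1) + (m + 1) • (x ^ l * y ^ m * x ^ j) := by
  rw [pow_succ, mul_assoc (x ^ l), mul_pow_succ_of_mul_sub_mul_eq_one h, pow_succ' x j]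
  simp only [mul_add, add_mul, mul_smul_comm, smul_mul_assoc, mul_assoc]

namespace WeylAlgebra

variable {n : ℕ} {W : WeylAlgebra n}

theorem a_mul_star_sub_star_mul_a (i : Fin n) :
    W.a i * star (W.a i) - star (W.a i) * W.a i = 1 := by
  simpa using W.ccr i i

theorem isSOS_zero : W.IsSOS 0 := ⟨0, fun _ => 0, by simp⟩

theorem isSOS_star_mul_self (f : W.carrier) : W.IsSOS (star f * f) :=
  ⟨1, fun _ => f, by simp⟩

theorem IsSOS.add {p q : W.carrier} (hp : W.IsSOS p) (hq : W.IsSOS q) : W.IsSOS (p + q) := by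
  obtain ⟨N, f, rfl⟩ := hp
  obtain ⟨M, g, rfl⟩ := hq
  exact ⟨N + M, Fin.append f g, by simp [Fin.sum_univ_add]⟩

theorem IsSOS.nsmul {p : W.carrier} (hp : W.IsSOS p) (m : ℕ) : W.IsSOS (m • p) := by
  induction m with
  | zero => simpa using isSOS_zero
  | succ m ih => rw [succ_nsmul]; exact ih.add hp

theorem isSOS_a_pow_mul_star_pow_mul_a_pow (i : Fin n) (l j : ℕ) :
    W.IsSOS (W.a i ^ l * star (W.a i) ^ (l + j) * W.a i ^ j) := by
  induction l generalizing j with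
  | zero => simpa [star_pow] using isSOS_star_mul_self (W.a i ^ j)
  | succ l ih =>
    have hsplit := pow_succ_mul_pow_succ_mul_pow_of_mul_sub_mul_eq_one
      (a_mul_star_sub_star_mul_a (W := W) i) l (l + j) j
    rw [Nat.add_right_comm, hsplit]
    refine .add ?_ ((ih j).nsmul _)
    simpa [add_assoc] using ih (j + 1)

end WeylAlgebra

/-- In `W₁`, for all `l ≤ k`, the element `a^l (a*)^k a^{k-l}`
belongs to `Σ²`. -/
theorem weyl1_mixed_sos (W : WeylAlgebra 1) (l k : ℕ) (h : l ≤ k) :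
    W.IsSOS (W.a 0 ^ l * star (W.a 0) ^ k * W.a 0 ^ (k - l)) := by
  obtain ⟨j, rfl⟩ := Nat.exists_eq_add_of_le h
  simpa using WeylAlgebra.isSOS_a_pow_mul_star_pow_mul_a_pow (W := W) 0 l j
end
end

section
/- Let n ≥ 1, c > 2, and r ∈ ℕ. Then l1(g^r_c) ≤ c/(c−2). -/
open scoped ComplexOrder

noncomputable section

/-!
Normal ordering `a^p (a*)^q` with `[a, a*] = 1` produces the coefficients `C(p,k) · q!/(q-k)!`
in front of `(a*)^(q-k) a^(p-k)`. For `p = q = t` they sum to at most `2^t t!`, so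
`l1(a^t (a^t)*) ≤ 2^‖t‖₁ ∏ tᵢ!`. Since `∏ tᵢ! ≤ d!` when `‖t‖₁ = d`, and there are
`C(n+d-1, d)` such multi-indices, the part of `g^r_c` of degree `d` has `l1` at most
`(2/c)^d`, and the geometric series sums to `c/(c-2)`.
-/

section CanonicalCommutation

variable {R : Type*} [Ring R] {A S : R}

theorem mul_pow_of_mul_eq_add_one (h : A * S = S * A + 1) :
    ∀ m : ℕ, A * S ^ m = S ^ m * A + m • S ^ (m - 1)
  | 0 => by simp
  | m + 1 => by
    calc A * S ^ (m + 1) = (A * S ^ m) * S := by rw [pow_succ, mul_assoc]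
      _ = S ^ m * (A * S) + m • (S ^ (m - 1) * S) := by
        rw [mul_pow_of_mul_eq_add_one h m, add_mul, smul_mul_assoc, mul_assoc]
      _ = S ^ (m + 1) * A + (m + 1) • S ^ m := by
        rcases m with _ | m
        · simp [h]
        · rw [h, ← pow_succ, Nat.add_sub_cancel, mul_add, ← mul_assoc, ← pow_succ]
          simp only [mul_one, add_smul, one_smul]
          abel

theorem pow_mul_pow_of_mul_eq_add_one (h : A * S = S * A + 1) (p q : ℕ) :
    A ^ p * S ^ q = ∑ k ∈ Finset.range (p + 1),
      (p.choose k * q.descFactorial k) • (S ^ (q - k) * A ^ (p - k)) := by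
  induction p with
  | zero => simp
  | succ p ih =>
    set T : ℕ → R := fun k => S ^ (q - k) * A ^ (p + 1 - k)
    have mul_term : ∀ k ≤ p, A * (S ^ (q - k) * A ^ (p - k)) = T k + (q - k) • T (k + 1) := by
      intro k hk
      rw [← mul_assoc, mul_pow_of_mul_eq_add_one h, add_mul, smul_mul_assoc, mul_assoc,
        ← pow_succ', Nat.sub_sub, show p - k + 1 = p + 1 - k by omega,
        show p - k = p + 1 - (k + 1) by omega]
    calc A ^ (p + 1) * S ^ q = A * (A ^ p * S ^ q) := by rw [pow_succ', mul_assoc]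
      _ = ∑ k ∈ Finset.range (p + 1), (p.choose k * q.descFactorial k) • T k
          + ∑ k ∈ Finset.range (p + 1), (p.choose k * q.descFactorial (k + 1)) • T (k + 1) := by
        rw [ih, Finset.mul_sum, ← Finset.sum_add_distrib]
        refine Finset.sum_congr rfl fun k hk => ?_
        rw [mul_smul_comm, mul_term k (Nat.lt_succ_iff.mp (Finset.mem_range.mp hk)),
          smul_add, smul_smul, Nat.descFactorial_succ]
        ring_nf
      _ = ∑ k ∈ Finset.range (p + 1 + 1), ((p + 1).choose k * q.descFactorial k) • T k := by
        rw [Finset.sum_range_succ' (fun k => (p.choose k * q.descFactorial k) • T k),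
          Finset.sum_range_succ' (fun k => ((p + 1).choose k * q.descFactorial k) • T k)]
        simp only [Nat.choose_succ_succ, add_mul, add_smul, Finset.sum_add_distrib]
        rw [Finset.sum_range_succ
            (fun k => (p.choose (k + 1) * q.descFactorial (k + 1)) • T (k + 1)),
          Nat.choose_succ_self, zero_mul, zero_smul, add_zero, Nat.choose_zero_right,
          Nat.choose_zero_right]
        abel
      _ = _ := by simp [T]

end CanonicalCommutation

namespace List

theorem star_prod_ofFn {R : Type*} [Monoid R] [StarMul R] {m : ℕ} (f : Fin m → R)
    (h : ∀ i j, Commute (f i) (f j)) :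
    star (ofFn f).prod = (ofFn fun i => star (f i)).prod := by
  have star_prod_eq := unop_map_list_prod (starMulEquiv : R ≃* Rᵐᵒᵖ) (ofFn f)
  simp only [starMulEquiv_apply, MulOpposite.unop_op, map_ofFn] at star_prod_eq
  rw [star_prod_eq]
  refine (reverse_perm (ofFn fun i => star (f i))).prod_eq' ?_
  simpa [pairwise_reverse, pairwise_ofFn] using fun i j _ => h j i

theorem prod_ofFn_mul_of_commute {M : Type*} [Monoid M] :
    ∀ {m : ℕ} (u v : Fin m → M), (∀ i j, i ≠ j → Commute (v i) (u j)) →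
      (ofFn fun i => u i * v i).prod = (ofFn u).prod * (ofFn v).prod
  | 0, _, _, _ => by simp
  | m + 1, u, v, h => by
    have hv : Commute (v 0) (ofFn fun i => u i.succ).prod :=
      Commute.list_prod_right _ _ <| by
        simpa [mem_ofFn] using fun j => h 0 j.succ (Fin.succ_ne_zero j).symm
    simp only [ofFn_succ, prod_cons,
      prod_ofFn_mul_of_commute (fun i => u i.succ) (fun i => v i.succ)
        (fun i j hij => h _ _ (Fin.succ_injective _ |>.ne hij))]
    rw [mul_assoc, ← mul_assoc (v 0), hv.eq, mul_assoc, mul_assoc]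

theorem prod_ofFn_nsmul {R : Type*} [Semiring R] :
    ∀ {m : ℕ} (c : Fin m → ℕ) (x : Fin m → R),
      (ofFn fun i => c i • x i).prod = (∏ i, c i) • (ofFn x).prod
  | 0, _, _ => by simp
  | m + 1, c, x => by
    rw [ofFn_succ, prod_cons, ofFn_succ, prod_cons, prod_ofFn_nsmul,
      Fin.prod_univ_succ, smul_mul_assoc, mul_smul_comm, smul_smul, mul_comm]

theorem prod_ofFn_sum {R κ : Type*} [Semiring R] :
    ∀ {m : ℕ} (K : Fin m → Finset κ) (f : Fin m → κ → R),
      (ofFn fun i => ∑ k ∈ K i, f i k).prod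
        = ∑ k ∈ Fintype.piFinset K, (ofFn fun i => f i (k i)).prod
  | 0, _, _ => by simp
  | m + 1, K, f => by
    classical
    have piFinset_eq := Finset.filter_piFinset_eq_map_consEquiv K (fun _ => True)
    simp only [Finset.filter_true] at piFinset_eq
    rw [piFinset_eq, Finset.sum_map, Finset.sum_product, ofFn_succ, prod_cons,
      prod_ofFn_sum, Finset.sum_mul_sum]
    simp only [Function.Embedding.coeFn_mk, Fin.consEquiv_apply, ofFn_succ, Fin.cons_zero,
      Fin.cons_succ, prod_cons]
    rfl

end List

theorem Nat.sum_choose_mul_descFactorial_le (m : ℕ) :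
    ∑ k ∈ Finset.range (m + 1), m.choose k * m.descFactorial k ≤ 2 ^ m * m.factorial := by
  calc ∑ k ∈ Finset.range (m + 1), m.choose k * m.descFactorial k
      ≤ ∑ k ∈ Finset.range (m + 1), m.choose k * m.factorial := by
        gcongr with k hk
        exact (Nat.le_mul_of_pos_left _ (Nat.factorial_pos _)).trans_eq
          (Nat.factorial_mul_descFactorial (Nat.lt_succ_iff.mp (Finset.mem_range.mp hk)))
    _ = 2 ^ m * m.factorial := by rw [← Finset.sum_mul, Nat.sum_range_choose]

-- Equality for `0 < n`; for `n = 0` the truncated subtractions make it strict.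
theorem Nat.add_sub_one_choose_mul_factorial_mul_factorial_le (n d : ℕ) :
    (n + d - 1).choose d * d.factorial * (n - 1).factorial ≤ (n + d - 1).factorial := by
  rcases n with _ | n
  · rcases d with _ | d <;> simp
  · simpa [Nat.add_right_comm n 1 d] using
      (Nat.choose_mul_factorial_mul_factorial (Nat.le_add_left d n)).le

namespace Finset

theorem sum_piFinset_prod_choose_mul_descFactorial_le {n : ℕ} (t : Fin n → ℕ) :
    ∑ k ∈ Fintype.piFinset (fun i => range (t i + 1)),
        ∏ i, (t i).choose (k i) * (t i).descFactorial (k i)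
      ≤ 2 ^ (∑ i, t i) * ∏ i, (t i).factorial := by
  rw [← prod_univ_sum (fun i => range (t i + 1))
    (fun i k => (t i).choose k * (t i).descFactorial k), ← prod_pow_eq_pow_sum,
    ← prod_mul_distrib]
  exact prod_le_prod' fun i _ => Nat.sum_choose_mul_descFactorial_le (t i)

theorem card_piAntidiag_univ_fin (n d : ℕ) :
    #(piAntidiag (univ : Finset (Fin n)) d) = (n + d - 1).choose d := by
  rw [← map_sym_eq_piAntidiag, card_map, sym_univ, card_univ, Sym.card_sym_eq_choose,
    Fintype.card_fin]

theorem sum_piAntidiag_prod_factorial_mul_le (n d : ℕ) :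
    (∑ t ∈ piAntidiag (univ : Finset (Fin n)) d, ∏ i, (t i).factorial) * (n - 1).factorial
      ≤ (n + d - 1).factorial := by
  have prod_le : ∀ t ∈ piAntidiag (univ : Finset (Fin n)) d, ∏ i, (t i).factorial ≤ d.factorial :=
    fun t ht => Nat.le_of_dvd d.factorial_pos <| by
      simpa [(mem_piAntidiag.mp ht).1] using Nat.prod_factorial_dvd_factorial_sum univ t
  calc (∑ t ∈ piAntidiag (univ : Finset (Fin n)) d, ∏ i, (t i).factorial) * (n - 1).factorial
      ≤ (n + d - 1).choose d * d.factorial * (n - 1).factorial := by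
        gcongr
        simpa [card_piAntidiag_univ_fin] using sum_le_card_nsmul _ _ _ prod_le
    _ ≤ (n + d - 1).factorial := Nat.add_sub_one_choose_mul_factorial_mul_factorial_le n d

end Finset

open Finset in
theorem sum_piAntidiag_gpoly_weight_le {c : ℝ} (hc : 0 < c) (n d : ℕ) :
    ∑ t ∈ piAntidiag (univ : Finset (Fin n)) d,
        ((n - 1).factorial : ℝ) / (c ^ (∑ i, t i) * (n + ∑ i, t i - 1).factorial)
          * (2 ^ (∑ i, t i) * ∏ i, ((t i).factorial : ℝ))
      ≤ (2 / c) ^ d := by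
  have factorials_le : (∑ t ∈ piAntidiag (univ : Finset (Fin n)) d, ∏ i, ((t i).factorial : ℝ))
      * (n - 1).factorial ≤ (n + d - 1).factorial := by
    exact_mod_cast sum_piAntidiag_prod_factorial_mul_le n d
  calc ∑ t ∈ piAntidiag (univ : Finset (Fin n)) d,
        ((n - 1).factorial : ℝ) / (c ^ (∑ i, t i) * (n + ∑ i, t i - 1).factorial)
          * (2 ^ (∑ i, t i) * ∏ i, ((t i).factorial : ℝ))
      = (2 / c) ^ d * ((∑ t ∈ piAntidiag (univ : Finset (Fin n)) d,
          ∏ i, ((t i).factorial : ℝ)) * (n - 1).factorial / (n + d - 1).factorial) := by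
        rw [sum_congr rfl fun t ht => by rw [(mem_piAntidiag.mp ht).1], ← mul_sum, ← mul_sum,
          div_pow]
        field_simp
    _ ≤ (2 / c) ^ d := mul_le_of_le_one_right (by positivity)
        (div_le_one_of_le₀ factorials_le (by positivity))

namespace WeylAlgebra

variable {n : ℕ} (W : WeylAlgebra n)

theorem a_mul_star_a_of_ne {i j : Fin n} (h : i ≠ j) :
    W.a i * star (W.a j) = star (W.a j) * W.a i :=
  sub_eq_zero.mp <| by simpa [h] using W.ccr i j

theorem a_mul_star_a_self (i : Fin n) : W.a i * star (W.a i) = star (W.a i) * W.a i + 1 :=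
  sub_eq_iff_eq_add'.mp <| by simpa using W.ccr i i

theorem star_amon_s11 (t : Fin n → ℕ) :
    star (W.amon t) = (List.ofFn fun i => star (W.a i) ^ t i).prod := by
  simp only [amon, ← star_pow]
  exact List.star_prod_ofFn _ fun i j => Commute.pow_pow (W.comm_aa i j) _ _

theorem amon_mul_star_amon (t : Fin n → ℕ) :
    W.amon t * star (W.amon t)
      = ∑ k ∈ Fintype.piFinset (fun i => Finset.range (t i + 1)),
          (∏ i, (t i).choose (k i) * (t i).descFactorial (k i)) •
            W.nmon (fun i => t i - k i) (fun i => t i - k i) := by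
  rw [star_amon_s11, amon, ← List.prod_ofFn_mul_of_commute _ _ fun i j hij =>
    Commute.pow_pow (W.a_mul_star_a_of_ne hij.symm).symm _ _]
  simp only [pow_mul_pow_of_mul_eq_add_one (W.a_mul_star_a_self _), List.prod_ofFn_sum,
    List.prod_ofFn_nsmul]
  refine Finset.sum_congr rfl fun k _ => ?_
  rw [List.prod_ofFn_mul_of_commute _ _ fun i j hij =>
    Commute.pow_pow (W.a_mul_star_a_of_ne hij) _ _]
  rfl

theorem l1_add_le (p q : W.carrier) : W.l1 (p + q) ≤ W.l1 p + W.l1 q := by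
  classical
  simp only [l1, map_add]
  rw [Finsupp.sum_of_support_subset _ Finsupp.support_add _ fun _ _ => norm_zero,
    Finsupp.sum_of_support_subset _ Finset.subset_union_left _ fun _ _ => norm_zero,
    Finsupp.sum_of_support_subset _ Finset.subset_union_right _ fun _ _ => norm_zero,
    ← Finset.sum_add_distrib]
  exact Finset.sum_le_sum fun _ _ => norm_add_le _ _

theorem l1_sum_le {ι : Type*} (s : Finset ι) (f : ι → W.carrier) :
    W.l1 (∑ i ∈ s, f i) ≤ ∑ i ∈ s, W.l1 (f i) :=
  Finset.le_sum_of_subadditive W.l1 (by simp [l1]) W.l1_add_le s f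

theorem l1_smul (γ : ℂ) (p : W.carrier) : W.l1 (γ • p) = ‖γ‖ * W.l1 p := by
  simp only [l1, map_smul]
  rw [Finsupp.sum_smul_index' fun _ => norm_zero, Finsupp.mul_sum]
  simp only [smul_eq_mul, norm_mul]

theorem l1_nmon (s t : Fin n → ℕ) : W.l1 (W.nmon s t) = 1 := by
  rw [l1, nmon, ← W.basis_eq (s, t), Module.Basis.repr_self]
  simp

theorem l1_amon_mul_star_amon_le (t : Fin n → ℕ) :
    W.l1 (W.amon t * star (W.amon t)) ≤ 2 ^ (∑ i, t i) * ∏ i, ((t i).factorial : ℝ) := by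
  rw [amon_mul_star_amon]
  refine (W.l1_sum_le _ _).trans ?_
  simp only [← Nat.cast_smul_eq_nsmul ℂ, l1_smul, l1_nmon, mul_one, Complex.norm_natCast]
  exact_mod_cast Finset.sum_piFinset_prod_choose_mul_descFactorial_le t

end WeylAlgebra

open Finset in
theorem l1_gpoly_bound_general {n : ℕ} (c : ℝ) (hc : 2 < c) (r : ℕ)
    (W : WeylAlgebra n) :
    W.l1 (W.gpoly c r) ≤ c / (c - 2) := by
  have hc0 : 0 < c := by linarith
  set f : (Fin n → ℕ) → ℝ := fun t =>
    ((n - 1).factorial : ℝ) / (c ^ (∑ i, t i) * (n + ∑ i, t i - 1).factorial)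
      * (2 ^ (∑ i, t i) * ∏ i, ((t i).factorial : ℝ))
  set T := (Fintype.piFinset fun _ : Fin n => range (r + 1)).filter (fun t => ∑ i, t i ≤ r)
  calc W.l1 (W.gpoly c r) ≤ ∑ t ∈ T, f t := by
        refine (W.l1_sum_le _ _).trans (sum_le_sum fun t _ => ?_)
        rw [W.l1_smul]
        simp only [f, norm_div, norm_mul, norm_pow, Complex.norm_real, Complex.norm_natCast,
          Real.norm_of_nonneg hc0.le]
        gcongr
        exact W.l1_amon_mul_star_amon_le t
    _ = ∑ d ∈ range (r + 1), ∑ t ∈ T with ∑ i, t i = d, f t :=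
        (sum_fiberwise_of_maps_to (fun t ht => by
          simpa [Nat.lt_succ_iff, T] using (mem_filter.mp ht).2) f).symm
    _ ≤ ∑ d ∈ range (r + 1), ∑ t ∈ piAntidiag univ d, f t :=
        sum_le_sum fun d _ => sum_le_sum_of_subset_of_nonneg
          (fun t ht => mem_piAntidiag.mpr ⟨(mem_filter.mp ht).2, by simp⟩)
          fun t _ _ => by positivity
    _ ≤ ∑ d ∈ range (r + 1), (2 / c) ^ d :=
        sum_le_sum fun d _ => sum_piAntidiag_gpoly_weight_le hc0 n d
    _ ≤ c / (c - 2) := by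
        rw [range_eq_Ico]
        refine (geom_sum_Ico_le_of_lt_one (by positivity) ((div_lt_one hc0).mpr hc)).trans_eq ?_
        field_simp

/-- For `c > 2`, `l1(g^r_c) ≤ c/(c-2)`. -/
theorem l1_gpoly_bound {n : ℕ} (hn : 1 ≤ n) (c : ℝ) (hc : 2 < c) (r : ℕ)
    (W : WeylAlgebra n) :
    W.l1 (W.gpoly c r) ≤ c / (c - 2) :=
  l1_gpoly_bound_general c hc r W
end
end
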